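/- arXiv:2304.13258 — 2 statements merged into one kernel-verified Lean document; each statement's English description precedes it below -/
import Mathlib

section
/- Let s_1, …, s_k ∈ ℝ^ℓ be pure states and p_1, …, p_k ≥ 0 weights with ∑_i p_i = 1 and ∑_i p_i s_i s_iᵀ = (1/ℓ)·I_ℓ. Let M ∈ ℝ^{ℓ×ℓ} be invertible with Mᵀ u_ℓ = u_ℓ, and suppose ‖M⁻¹ s_i‖² ≤ (u_ℓ·(M⁻¹ s_i))² for every i. Then det(MᵀM) ≥ 1. -/
open Matrix

/-! Put `tᵢ = M⁻¹ sᵢ`. Since `Mᵀ u = u`, also `(M⁻¹)ᵀ u = u`, so `u ⬝ tᵢ = u ⬝ sᵢ = 1` and the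
hypothesis says `‖tᵢ‖ ≤ 1`. Conjugating the design identity by `M⁻¹` gives
`(Mᵀ M)⁻¹ / ℓ = ∑ pᵢ tᵢ tᵢᵀ`, whose trace is at most `∑ pᵢ = 1`. By AM-GM on its eigenvalues,
`det (Mᵀ M)⁻¹ ≤ (tr (Mᵀ M)⁻¹ / ℓ) ^ ℓ ≤ 1`. -/

theorem Real.prod_le_sum_div_card_pow {ι : Type*} (s : Finset ι) {z : ι → ℝ}
    (hz : ∀ i ∈ s, 0 ≤ z i) : ∏ i ∈ s, z i ≤ ((∑ i ∈ s, z i) / s.card) ^ s.card := by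
  rcases s.eq_empty_or_nonempty with rfl | hs
  · simp
  have hcard : (0 : ℝ) < s.card := by exact_mod_cast hs.card_pos
  have amgm := Real.geom_mean_le_arith_mean s (fun _ => 1) z (fun _ _ => zero_le_one)
    (by simpa using hcard) hz
  simp only [Real.rpow_one, Finset.sum_const, nsmul_eq_mul, mul_one, one_mul] at amgm
  calc ∏ i ∈ s, z i = ((∏ i ∈ s, z i) ^ (s.card : ℝ)⁻¹) ^ s.card :=
        (Real.rpow_inv_natCast_pow (Finset.prod_nonneg hz) hs.card_pos.ne').symm
    _ ≤ ((∑ i ∈ s, z i) / s.card) ^ s.card :=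
        pow_le_pow_left₀ (Real.rpow_nonneg (Finset.prod_nonneg hz) _) amgm _

namespace Matrix

variable {n : Type*} [Fintype n]

theorem mul_vecMulVec_mul_transpose {m α : Type*} [CommSemiring α] (N : Matrix m n α)
    (x y : n → α) : N * vecMulVec x y * Nᵀ = vecMulVec (N *ᵥ x) (N *ᵥ y) := by
  rw [mul_vecMulVec, vecMulVec_mul, vecMul_transpose]

theorem trace_sum_smul_vecMulVec_self_le {ι : Type*} (s : Finset ι) {p : ι → ℝ} {t : ι → n → ℝ}
    (hp : ∀ i ∈ s, 0 ≤ p i) (hpsum : ∑ i ∈ s, p i = 1) (ht : ∀ i ∈ s, t i ⬝ᵥ t i ≤ 1) :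
    (∑ i ∈ s, p i • vecMulVec (t i) (t i)).trace ≤ 1 := by
  calc (∑ i ∈ s, p i • vecMulVec (t i) (t i)).trace = ∑ i ∈ s, p i * (t i ⬝ᵥ t i) := by
        simp only [trace_sum, trace_smul, trace_vecMulVec, smul_eq_mul]
    _ ≤ ∑ i ∈ s, p i := Finset.sum_le_sum fun i hi => mul_le_of_le_one_right (hp i hi) (ht i hi)
    _ = 1 := hpsum

variable [DecidableEq n]

theorem vecMul_nonsing_inv_of_vecMul_eq_self {α : Type*} [CommRing α] {A : Matrix n n α}
    (hA : IsUnit A.det) {v : n → α} (h : v ᵥ* A = v) : v ᵥ* A⁻¹ = v := by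
  conv_lhs => rw [← h]
  rw [vecMul_vecMul, mul_nonsing_inv A hA, vecMul_one]

theorem PosSemidef.det_le_trace_div_card_pow {A : Matrix n n ℝ} (hA : A.PosSemidef) :
    A.det ≤ (A.trace / Fintype.card n) ^ Fintype.card n := by
  rw [hA.1.det_eq_prod_eigenvalues, hA.1.trace_eq_sum_eigenvalues]
  simpa using Real.prod_le_sum_div_card_pow Finset.univ fun i _ => hA.eigenvalues_nonneg i

theorem one_le_det_of_det_inv_le_one {B : Matrix n n ℝ} (hB : B.PosDef) (h : B⁻¹.det ≤ 1) :
    1 ≤ B.det := by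
  rwa [det_nonsing_inv, Ring.inverse_eq_inv', inv_le_one₀ hB.det_pos] at h

end Matrix

theorem stmt2_general (ℓ : ℕ) (k : ℕ)
    (s : Fin k → (Fin ℓ → ℝ)) (p : Fin k → ℝ)
    (hpure : ∀ i, (1 : Fin ℓ → ℝ) ⬝ᵥ s i = 1 ∧ s i ⬝ᵥ s i = 1)
    (hp : ∀ i, 0 ≤ p i) (hpsum : ∑ i, p i = 1)
    (hdesign : ∑ i, p i • vecMulVec (s i) (s i) = (ℓ : ℝ)⁻¹ • (1 : Matrix (Fin ℓ) (Fin ℓ) ℝ))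
    (M : Matrix (Fin ℓ) (Fin ℓ) ℝ) (hM : IsUnit M.det)
    (hMu : Mᵀ *ᵥ (1 : Fin ℓ → ℝ) = 1)
    (hin : ∀ i, (M⁻¹ *ᵥ s i) ⬝ᵥ (M⁻¹ *ᵥ s i) ≤ ((1 : Fin ℓ → ℝ) ⬝ᵥ (M⁻¹ *ᵥ s i)) ^ 2) :
    1 ≤ (Mᵀ * M).det := by
  have hB : (Mᵀ * M).PosDef := by
    simpa using PosDef.conjTranspose_mul_self M (mulVec_injective_iff_isUnit.mpr ((isUnit_iff_isUnit_det M).mpr hM))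
  have hsum_one : ∀ i, (1 : Fin ℓ → ℝ) ⬝ᵥ (M⁻¹ *ᵥ s i) = 1 := fun i => by
    rw [dotProduct_mulVec, vecMul_nonsing_inv_of_vecMul_eq_self hM (by rwa [← mulVec_transpose]),
      (hpure i).1]
  have hdesign_conj : (ℓ : ℝ)⁻¹ • (Mᵀ * M)⁻¹ =
      ∑ i, p i • vecMulVec (M⁻¹ *ᵥ s i) (M⁻¹ *ᵥ s i) := by
    calc (ℓ : ℝ)⁻¹ • (Mᵀ * M)⁻¹ = M⁻¹ * ((ℓ : ℝ)⁻¹ • 1) * M⁻¹ᵀ := by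
          rw [Matrix.mul_inv_rev, ← transpose_nonsing_inv]; simp
      _ = _ := by
          simp only [← hdesign, Finset.mul_sum, Finset.sum_mul, Matrix.mul_smul, Matrix.smul_mul,
            mul_vecMulVec_mul_transpose]
  have htrace : (Mᵀ * M)⁻¹.trace / ℓ ≤ 1 := by
    rw [div_eq_inv_mul, ← smul_eq_mul, ← trace_smul, hdesign_conj]
    exact trace_sum_smul_vecMulVec_self_le _ (fun i _ => hp i) hpsum
      fun i _ => by simpa [hsum_one i] using hin i
  refine one_le_det_of_det_inv_le_one hB ?_
  calc (Mᵀ * M)⁻¹.det ≤ ((Mᵀ * M)⁻¹.trace / ℓ) ^ ℓ := by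
        simpa using hB.inv.posSemidef.det_le_trace_div_card_pow
    _ ≤ 1 := pow_le_one₀ (div_nonneg hB.inv.posSemidef.trace_nonneg ℓ.cast_nonneg) htrace

/-- Let `s 1, …, s k` be pure states (on the hyperplane `uₗ ⬝ v = 1`,
with unit norm) and `p` nonnegative weights summing to one that form a spherical
2-design, i.e. `∑ i, p i • sᵢ sᵢᵀ = (1/ℓ) I`.  If `M` is invertible with
`Mᵀ uₗ = uₗ` and `‖M⁻¹ sᵢ‖² ≤ (uₗ ⬝ (M⁻¹ sᵢ))²` for every `i`,
then `det (Mᵀ M) ≥ 1`. -/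
theorem stmt2 (ℓ : ℕ) (hℓ : 0 < ℓ) (k : ℕ)
    (s : Fin k → (Fin ℓ → ℝ)) (p : Fin k → ℝ)
    (hpure : ∀ i, (1 : Fin ℓ → ℝ) ⬝ᵥ s i = 1 ∧ s i ⬝ᵥ s i = 1)
    (hp : ∀ i, 0 ≤ p i) (hpsum : ∑ i, p i = 1)
    (hdesign : ∑ i, p i • vecMulVec (s i) (s i) = (ℓ : ℝ)⁻¹ • (1 : Matrix (Fin ℓ) (Fin ℓ) ℝ))
    (M : Matrix (Fin ℓ) (Fin ℓ) ℝ) (hM : IsUnit M.det)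
    (hMu : Mᵀ *ᵥ (1 : Fin ℓ → ℝ) = 1)
    (hin : ∀ i, (M⁻¹ *ᵥ s i) ⬝ᵥ (M⁻¹ *ᵥ s i) ≤ ((1 : Fin ℓ → ℝ) ⬝ᵥ (M⁻¹ *ᵥ s i)) ^ 2) :
    1 ≤ (Mᵀ * M).det :=
  stmt2_general ℓ k s p hpure hp hpsum hdesign M hM hMu hin
end

section
/- Let ℓ ≤ n be positive integers, 𝕊 ⊆ ℝ^ℓ, and let 𝒫 ⊆ ℝ^n span an ℓ-dimensional subspace of ℝ^n. Let M ∈ ℝ^{n×ℓ} with Moore–Penrose pseudoinverse P satisfy P M = I_ℓ, Mᵀ u_n = u_ℓ, and M P p = p for every p ∈ 𝒫. Then ℳ_𝕊(P𝒫) = {P N : N ∈ ℳ_𝕊(𝒫)} and ℳ_𝕊(𝒫) = {M L : L ∈ ℳ_𝕊(P𝒫)}; that is, left multiplication by M is a bijection from ℳ_𝕊(P𝒫) onto ℳ_𝕊(𝒫), with inverse given by left multiplication by P. -/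
open Matrix

/-- The set `ℳ_𝕊(𝒬)` of quasi-measurements from `𝕊` consistent with `𝒬`. -/
def consistentSet {ℓ n : ℕ} (𝕊 : Set (Fin ℓ → ℝ)) (𝒬 : Set (Fin n → ℝ)) :
    Set (Matrix (Fin n) (Fin ℓ) ℝ) :=
  {M | Mᵀ *ᵥ (1 : Fin n → ℝ) = (1 : Fin ℓ → ℝ) ∧ 𝒬 ⊆ (fun v => M *ᵥ v) '' 𝕊}

/-!
Left multiplication by `M` and by `P` map the two consistent sets into each other: the
column-sum condition transfers through `Mᵀ uₙ = uₗ`, and `𝒬 ⊆ N 𝕊` transfers because `M P`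
fixes `𝒬`. They are mutually inverse: `P M = 1` on one side; on the other, any `N` with
`𝒬 ⊆ N 𝕊` has range containing `span 𝒬`, which has dimension `ℓ` and hence *is* the range of
`N`, so `M P`, fixing `span 𝒬` pointwise, satisfies `M P N = N`.
-/

namespace Matrix

variable {m k : Type*} [Fintype k]

theorem mulVec_eq_self_of_mem_span [Fintype m] {R : Type*} [CommSemiring R] {A : Matrix m m R}
    {𝒬 : Set (m → R)} (hA : ∀ p ∈ 𝒬, A *ᵥ p = p) {x : m → R} (hx : x ∈ Submodule.span R 𝒬) :
    A *ᵥ x = x :=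
  (Submodule.span_le (p := LinearMap.eqLocus A.mulVecLin LinearMap.id)).mpr hA hx

theorem span_eq_range_mulVecLin {K : Type*} [Field K] {N : Matrix m k K} {𝒬 : Set (m → K)}
    (hrank : Module.finrank K (Submodule.span K 𝒬) = Fintype.card k)
    (hN : 𝒬 ⊆ Set.range (N *ᵥ ·)) :
    Submodule.span K 𝒬 = LinearMap.range N.mulVecLin := by
  refine Submodule.eq_of_le_of_finrank_le (Submodule.span_le.mpr hN) ?_
  calc Module.finrank K (LinearMap.range N.mulVecLin)
      ≤ Module.finrank K (k → K) := LinearMap.finrank_range_le _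
    _ = Module.finrank K (Submodule.span K 𝒬) := by
      rw [Module.finrank_fintype_fun_eq_card, hrank]

theorem mul_eq_self_of_subset_range [Fintype m] {K : Type*} [Field K] {A : Matrix m m K}
    {N : Matrix m k K} {𝒬 : Set (m → K)} (hA : ∀ p ∈ 𝒬, A *ᵥ p = p)
    (hrank : Module.finrank K (Submodule.span K 𝒬) = Fintype.card k)
    (hN : 𝒬 ⊆ Set.range (N *ᵥ ·)) :
    A * N = N := by
  refine ext_iff_mulVec.mpr fun v => ?_
  have hv : N *ᵥ v ∈ Submodule.span K 𝒬 := by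
    rw [span_eq_range_mulVecLin hrank hN]
    exact ⟨v, rfl⟩
  rw [← mulVec_mulVec, mulVec_eq_self_of_mem_span hA hv]

theorem transpose_mul_mulVec_of_transpose_mulVec [Fintype m] {l R : Type*} [CommSemiring R]
    {M : Matrix m k R} {u : m → R} {w : k → R} (hM : Mᵀ *ᵥ u = w) (L : Matrix k l R) :
    (M * L)ᵀ *ᵥ u = Lᵀ *ᵥ w := by
  rw [transpose_mul, ← mulVec_mulVec, hM]

end Matrix

section consistentSet

variable {ℓ n : ℕ} {𝕊 : Set (Fin ℓ → ℝ)} {𝒬 : Set (Fin n → ℝ)}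
  {M : Matrix (Fin n) (Fin ℓ) ℝ} {P : Matrix (Fin ℓ) (Fin n) ℝ}

theorem mul_mem_consistentSet (hMu : Mᵀ *ᵥ (1 : Fin n → ℝ) = 1)
    (hfix : ∀ p ∈ 𝒬, M *ᵥ (P *ᵥ p) = p) {L : Matrix (Fin ℓ) (Fin ℓ) ℝ}
    (hL : L ∈ consistentSet 𝕊 ((P *ᵥ ·) '' 𝒬)) :
    M * L ∈ consistentSet 𝕊 𝒬 := by
  obtain ⟨hLu, hL𝒬⟩ := hL
  refine ⟨by rw [transpose_mul_mulVec_of_transpose_mulVec hMu, hLu], fun q hq => ?_⟩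
  obtain ⟨s, hs, hLs⟩ := hL𝒬 ⟨q, hq, rfl⟩
  refine ⟨s, hs, ?_⟩
  dsimp only at hLs ⊢
  rw [← mulVec_mulVec, hLs, hfix q hq]

theorem mul_mul_eq_self_of_mem_consistentSet
    (hspan : Module.finrank ℝ (Submodule.span ℝ 𝒬) = ℓ)
    (hfix : ∀ p ∈ 𝒬, M *ᵥ (P *ᵥ p) = p) {N : Matrix (Fin n) (Fin ℓ) ℝ}
    (hN : N ∈ consistentSet 𝕊 𝒬) :
    M * (P * N) = N := by
  rw [← Matrix.mul_assoc]
  refine mul_eq_self_of_subset_range (fun p hp => ?_) (by rw [hspan, Fintype.card_fin]) ?_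
  · rw [← mulVec_mulVec, hfix p hp]
  · rintro q hq
    obtain ⟨s, -, hNs⟩ := hN.2 hq
    exact ⟨s, hNs⟩

theorem mul_mem_consistentSet_image (hMu : Mᵀ *ᵥ (1 : Fin n → ℝ) = 1)
    {N : Matrix (Fin n) (Fin ℓ) ℝ} (hMPN : M * (P * N) = N) (hN : N ∈ consistentSet 𝕊 𝒬) :
    P * N ∈ consistentSet 𝕊 ((P *ᵥ ·) '' 𝒬) := by
  obtain ⟨hNu, hN𝒬⟩ := hN
  refine ⟨?_, ?_⟩
  · rw [← transpose_mul_mulVec_of_transpose_mulVec hMu, hMPN, hNu]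
  · rintro _ ⟨q, hq, rfl⟩
    obtain ⟨s, hs, hNs⟩ := hN𝒬 hq
    refine ⟨s, hs, ?_⟩
    dsimp only at hNs ⊢
    rw [← mulVec_mulVec, hNs]

end consistentSet

theorem stmt8_general (ℓ n : ℕ)
    (𝕊 : Set (Fin ℓ → ℝ)) (𝒬 : Set (Fin n → ℝ))
    (hspan : Module.finrank ℝ (Submodule.span ℝ 𝒬) = ℓ)
    (M : Matrix (Fin n) (Fin ℓ) ℝ) (P : Matrix (Fin ℓ) (Fin n) ℝ)
    (hPM : P * M = 1)
    (hMu : Mᵀ *ᵥ (1 : Fin n → ℝ) = (1 : Fin ℓ → ℝ))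
    (hfix : ∀ p ∈ 𝒬, M *ᵥ (P *ᵥ p) = p) :
    consistentSet 𝕊 ((fun p => P *ᵥ p) '' 𝒬) =
        (fun N => P * N) '' consistentSet 𝕊 𝒬 ∧
      consistentSet 𝕊 𝒬 =
        (fun L => M * L) '' consistentSet 𝕊 ((fun p => P *ᵥ p) '' 𝒬) := by
  have hinv : Set.InvOn (P * ·) (M * ·)
      (consistentSet 𝕊 ((P *ᵥ ·) '' 𝒬)) (consistentSet 𝕊 𝒬) :=
    ⟨fun L _ => show P * (M * L) = L by rw [← Matrix.mul_assoc, hPM, Matrix.one_mul],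
      fun N hN => mul_mul_eq_self_of_mem_consistentSet hspan hfix hN⟩
  have hMmaps : Set.MapsTo (M * ·) (consistentSet 𝕊 ((P *ᵥ ·) '' 𝒬)) (consistentSet 𝕊 𝒬) :=
    fun L hL => mul_mem_consistentSet hMu hfix hL
  have hPmaps : Set.MapsTo (P * ·) (consistentSet 𝕊 𝒬) (consistentSet 𝕊 ((P *ᵥ ·) '' 𝒬)) :=
    fun N hN => mul_mem_consistentSet_image hMu (hinv.2 hN) hN
  exact ⟨(hinv.symm.bijOn hPmaps hMmaps).image_eq.symm,
    (hinv.bijOn hMmaps hPmaps).image_eq.symm⟩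

/-- Let `𝒬 ⊆ ℝⁿ` span an `ℓ`-dimensional subspace and let `M` be an
informationally complete quasi-measurement with Moore–Penrose pseudoinverse `P`
(`P M = I`, `Mᵀ uₙ = uₗ`, `M P p = p` for all `p ∈ 𝒬`).  Then
`ℳ_𝕊(P 𝒬) = P ℳ_𝕊(𝒬)` and `ℳ_𝕊(𝒬) = M ℳ_𝕊(P 𝒬)`, i.e. left multiplication by `M`
is a bijection from `ℳ_𝕊(P 𝒬)` onto `ℳ_𝕊(𝒬)` with inverse left multiplication by `P`. -/
theorem stmt8 (ℓ n : ℕ) (hℓ : 0 < ℓ) (hn : ℓ ≤ n)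
    (𝕊 : Set (Fin ℓ → ℝ)) (𝒬 : Set (Fin n → ℝ))
    (hspan : Module.finrank ℝ (Submodule.span ℝ 𝒬) = ℓ)
    (M : Matrix (Fin n) (Fin ℓ) ℝ) (P : Matrix (Fin ℓ) (Fin n) ℝ)
    (hMP1 : M * P * M = M) (hMP2 : P * M * P = P)
    (hMP3 : (M * P)ᵀ = M * P) (hMP4 : (P * M)ᵀ = P * M)
    (hPM : P * M = 1)
    (hMu : Mᵀ *ᵥ (1 : Fin n → ℝ) = (1 : Fin ℓ → ℝ))
    (hfix : ∀ p ∈ 𝒬, M *ᵥ (P *ᵥ p) = p) :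
    consistentSet 𝕊 ((fun p => P *ᵥ p) '' 𝒬) =
        (fun N => P * N) '' consistentSet 𝕊 𝒬 ∧
      consistentSet 𝕊 𝒬 =
        (fun L => M * L) '' consistentSet 𝕊 ((fun p => P *ᵥ p) '' 𝒬) :=
  stmt8_general ℓ n 𝕊 𝒬 hspan M P hPM hMu hfix
end
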